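/- Under the constraints α·e^ε·p·c_set + β = 1, α·p·((e^ε−1)c_int + c_set) + β = 0, and e^ε·p·c_set + p·(k − c_set) = 1 with p > 0, α > 0, the quantity ((e^ε−1)c_int + c_set)·p·(α+β)^2 + (1 − e^ε·p·c_int − p·(c_set − c_int))·β^2 equals −β·(α+β). -/
import Mathlib


/-- Second-moment identity for coordinates `u ≠ v` in the ProjectiveGeometry
variance analysis:
`((e^ε−1)c_int + c_set)·p·(α+β)² + (1 − e^ε·p·c_int − p·(c_set−c_int))·β² = −β·(α+β)`. -/
theorem stmt_9 (ε : ℝ) (hε : 0 < ε) (cset cint k p α β : ℝ)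
    (hcint : 0 < cint) (hci : cint < cset) (hck : cset < k)
    (hp : p = 1 / ((Real.exp ε - 1) * cset + k))
    (hα : α = ((Real.exp ε - 1) * cset + k) / ((Real.exp ε - 1) * (cset - cint)))
    (hβ : β = -(((Real.exp ε - 1) * cint + cset) / ((Real.exp ε - 1) * (cset - cint))))
    (hp_pos : 0 < p) (hα_pos : 0 < α)
    (h1 : α * (Real.exp ε * p * cset) + β = 1)
    (h2 : α * (p * ((Real.exp ε - 1) * cint + cset)) + β = 0)
    (hnorm : Real.exp ε * p * cset + p * (k - cset) = 1) :
    ((Real.exp ε - 1) * cint + cset) * p * (α + β) ^ 2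
      + (1 - Real.exp ε * p * cint - p * (cset - cint)) * β ^ 2
      = -β * (α + β) := by
  have hE : 1 < Real.exp ε := by
    have := Real.exp_pos ε
    nlinarith [Real.add_one_le_exp ε, hε]
  have hE1 : Real.exp ε - 1 ≠ 0 := by linarith
  have hd : cset - cint ≠ 0 := by linarith
  have hden : (Real.exp ε - 1) * cset + k ≠ 0 := by nlinarith
  subst hp hα hβ
  field_simp
  ring
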